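/- Let G have m edges and arboricity α, and let p > 0 be a real number. If τ ≥ p·α, and L is the set of vertices of degree at most τ, then m_L := Σ_{v∈L} deg(v) satisfies m_L ≥ m·(1 − 2/p). -/

import Mathlib

/-!
There are at most `2m/τ ≤ 2m/(pα)` heavy vertices. Covering `G` by `α` forests, each forest has
fewer edges among the heavy vertices than there are heavy vertices, so at most `2m/p` edges have
both endpoints heavy. Every other edge has a light endpoint and is therefore counted in `m_L`.
-/

open scoped Classical

/-- The arboricity of a graph: the minimum number `k` such that the edge set can be
covered by `k` acyclic subgraphs (spanning forests). -/
noncomputable def arboricity {V : Type*} [Fintype V] (G : SimpleGraph V) : ℕ :=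
  sInf {k : ℕ | ∃ f : Fin k → SimpleGraph V,
    (∀ i, (f i).IsAcyclic) ∧ (∀ i, f i ≤ G) ∧ G.edgeSet ⊆ ⋃ i, (f i).edgeSet}

open Finset

namespace SimpleGraph

variable {V : Type*} {G : SimpleGraph V}

lemma isAcyclic_edge (u v : V) : (edge u v).IsAcyclic := by
  obtain rfl | huv := eq_or_ne u v
  · rw [edge_self_eq_bot]
    exact isAcyclic_bot
  · simpa using isAcyclic_bot.sup_edge_of_not_reachable (reachable_bot.not.mpr huv)

lemma isAcyclic_fromEdgeSet_singleton (e : Sym2 V) : (fromEdgeSet {e}).IsAcyclic := by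
  induction e using Sym2.ind with
  | h u v => exact isAcyclic_edge u v

lemma IsAcyclic.card_edgeFinset_le [Fintype V] [DecidableRel G.Adj] (hG : G.IsAcyclic) :
    #G.edgeFinset ≤ Fintype.card V - 1 := by
  cases isEmpty_or_nonempty V
  · simp [Subsingleton.elim G ⊥]
  -- `G` extends to a spanning tree `T` of the complete graph, which has `|V| - 1` edges.
  obtain ⟨T, hGT, -, hT, hreach⟩ :=
    (⊤ : SimpleGraph V).exists_isAcyclic_reachable_eq_le_of_le_of_isAcyclic le_top hG
  have hTree : T.IsTree :=
    ⟨(connected_iff T).mpr ⟨fun u v => hreach ▸ preconnected_top u v, inferInstance⟩, hT⟩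
  have := hTree.card_edgeFinset
  have := card_le_card (edgeFinset_subset_edgeFinset.mpr hGT)
  omega

lemma IsAcyclic.card_edgeFinset_inter_sym2_le [Fintype V] [DecidableRel G.Adj]
    (hG : G.IsAcyclic) (s : Finset V) : #(G.edgeFinset ∩ s.sym2) ≤ #s - 1 := by
  have hcard : #(G.edgeFinset ∩ s.sym2) = #(G.induce s).edgeFinset := by
    have h := congrArg card (G.map_edgeFinset_induce (s := (s : Set V)))
    rw [card_map] at h
    convert h.symm using 3
    simp
  simpa [hcard] using (hG.induce s).card_edgeFinset_le

lemma card_edgeFinset_le_card_inter_sym2_add_sum_degree [Fintype V] [DecidableRel G.Adj]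
    (s : Finset V) : #G.edgeFinset ≤ #(G.edgeFinset ∩ s.sym2) + ∑ v ∈ sᶜ, G.degree v := by
  have hcover :
      G.edgeFinset ⊆ (G.edgeFinset ∩ s.sym2) ∪ sᶜ.biUnion (G.incidenceFinset ·) := by
    intro e he
    by_cases hs : e ∈ s.sym2
    · exact mem_union_left _ (mem_inter.mpr ⟨he, hs⟩)
    · obtain ⟨v, hve, hvs⟩ : ∃ v ∈ e, v ∉ s := by simpa [mem_sym2_iff] using hs
      exact mem_union_right _ (mem_biUnion.mpr ⟨v, mem_compl.mpr hvs,
        (G.mem_incidenceFinset _ _).mpr ⟨mem_edgeFinset.mp he, hve⟩⟩)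
  calc #G.edgeFinset ≤ #(G.edgeFinset ∩ s.sym2) + #(sᶜ.biUnion (G.incidenceFinset ·)) :=
        (card_le_card hcover).trans (card_union_le _ _)
    _ ≤ #(G.edgeFinset ∩ s.sym2) + ∑ v ∈ sᶜ, G.degree v := by
        gcongr
        exact card_biUnion_le.trans (by simp [card_incidenceFinset_eq_degree])

lemma card_filter_lt_degree_mul_le [Fintype V] [DecidableRel G.Adj] (τ : ℝ) :
    (#{v | τ < G.degree v} : ℝ) * τ ≤ 2 * #G.edgeFinset := by
  calc (#{v | τ < G.degree v} : ℝ) * τ = ∑ v with τ < G.degree v, τ := by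
        rw [sum_const, nsmul_eq_mul]
    _ ≤ ∑ v with τ < G.degree v, (G.degree v : ℝ) :=
        sum_le_sum fun v hv => (mem_filter.mp hv).2.le
    _ ≤ ∑ v, (G.degree v : ℝ) :=
        sum_le_sum_of_subset_of_nonneg (subset_univ _) fun _ _ _ => by positivity
    _ = 2 * #G.edgeFinset := by exact_mod_cast G.sum_degrees_eq_twice_card_edges

def IsForestCover {k : ℕ} (G : SimpleGraph V) (f : Fin k → SimpleGraph V) : Prop :=
  (∀ i, (f i).IsAcyclic) ∧ (∀ i, f i ≤ G) ∧ G.edgeSet ⊆ ⋃ i, (f i).edgeSet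

lemma exists_isForestCover_fin_card_edgeFinset [Fintype V] [DecidableRel G.Adj] :
    ∃ f : Fin #G.edgeFinset → SimpleGraph V, G.IsForestCover f := by
  let edgeAt (i : Fin #G.edgeFinset) : G.edgeSet :=
    ⟨G.edgeFinset.equivFin.symm i, mem_edgeFinset.mp (G.edgeFinset.equivFin.symm i).2⟩
  refine ⟨fun i => fromEdgeSet {(edgeAt i : Sym2 V)}, fun i => isAcyclic_fromEdgeSet_singleton _,
    fun i => ?_, fun e he => ?_⟩
  · exact (fromEdgeSet_mono (Set.singleton_subset_iff.mpr (edgeAt i).2)).trans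
      G.fromEdgeSet_edgeSet.le
  · refine Set.mem_iUnion.mpr ⟨G.edgeFinset.equivFin ⟨e, mem_edgeFinset.mpr he⟩, ?_⟩
    simpa [edgeAt, edgeSet_fromEdgeSet] using G.not_isDiag_of_mem_edgeSet he

lemma exists_isForestCover_fin_arboricity [Fintype V] :
    ∃ f : Fin (arboricity G) → SimpleGraph V, G.IsForestCover f :=
  Nat.sInf_mem (s := {k | ∃ f : Fin k → SimpleGraph V, G.IsForestCover f})
    ⟨_, exists_isForestCover_fin_card_edgeFinset⟩

lemma IsForestCover.card_edgeFinset_inter_sym2_le [Fintype V] [DecidableRel G.Adj] {k : ℕ}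
    {f : Fin k → SimpleGraph V} (hf : G.IsForestCover f) (s : Finset V) :
    #(G.edgeFinset ∩ s.sym2) ≤ k * (#s - 1) := by
  obtain ⟨hacyclic, -, hcover⟩ := hf
  have hsub : G.edgeFinset ∩ s.sym2 ⊆ univ.biUnion fun i => (f i).edgeFinset ∩ s.sym2 := by
    intro e he
    rw [mem_inter, mem_edgeFinset] at he
    obtain ⟨i, hi⟩ := Set.mem_iUnion.mp (hcover he.1)
    exact mem_biUnion.mpr ⟨i, mem_univ i, mem_inter.mpr ⟨mem_edgeFinset.mpr hi, he.2⟩⟩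
  calc #(G.edgeFinset ∩ s.sym2) ≤ ∑ i, #((f i).edgeFinset ∩ s.sym2) :=
        (card_le_card hsub).trans card_biUnion_le
    _ ≤ ∑ _i : Fin k, (#s - 1) :=
        sum_le_sum fun i _ => (hacyclic i).card_edgeFinset_inter_sym2_le s
    _ = k * (#s - 1) := by simp

lemma card_edgeFinset_inter_sym2_le_arboricity_mul [Fintype V] [DecidableRel G.Adj]
    (s : Finset V) : #(G.edgeFinset ∩ s.sym2) ≤ arboricity G * #s := by
  obtain ⟨f, hf⟩ := exists_isForestCover_fin_arboricity (G := G)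
  exact (hf.card_edgeFinset_inter_sym2_le s).trans (Nat.mul_le_mul_left _ (Nat.sub_le _ _))

end SimpleGraph

open SimpleGraph

/-- If `τ ≥ p·α` with `p > 0`, then the sum of degrees of vertices of degree at most `τ`
is at least `m·(1 − 2/p)`. -/
theorem light_degree_sum_ge {V : Type*} [Fintype V] (G : SimpleGraph V)
    [DecidableRel G.Adj] (τ p : ℝ) (hp : 0 < p)
    (hτ : p * (arboricity G : ℝ) ≤ τ) :
    (G.edgeFinset.card : ℝ) * (1 - 2 / p)
      ≤ ∑ v ∈ Finset.univ.filter (fun v => (G.degree v : ℝ) ≤ τ), (G.degree v : ℝ) := by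
  set heavy : Finset V := {v | τ < G.degree v}
  have hlight : heavyᶜ = ({v | (G.degree v : ℝ) ≤ τ} : Finset V) := by
    simp [heavy, compl_filter]
  have hedges : (#G.edgeFinset : ℝ)
      ≤ #(G.edgeFinset ∩ heavy.sym2) + ∑ v ∈ heavyᶜ, (G.degree v : ℝ) := by
    exact_mod_cast card_edgeFinset_le_card_inter_sym2_add_sum_degree heavy
  have hheavy_edges : p * #(G.edgeFinset ∩ heavy.sym2) ≤ 2 * #G.edgeFinset :=
    calc p * #(G.edgeFinset ∩ heavy.sym2) ≤ p * (arboricity G * #heavy) := by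
          gcongr
          exact_mod_cast card_edgeFinset_inter_sym2_le_arboricity_mul heavy
      _ = #heavy * (p * arboricity G) := by ring
      _ ≤ #heavy * τ := by gcongr
      _ ≤ 2 * #G.edgeFinset := card_filter_lt_degree_mul_le τ
  rw [← hlight]
  calc (#G.edgeFinset : ℝ) * (1 - 2 / p) = #G.edgeFinset - 2 * #G.edgeFinset / p := by ring
    _ ≤ #G.edgeFinset - #(G.edgeFinset ∩ heavy.sym2) := by
        gcongr
        rw [le_div_iff₀ hp]
        linarith
    _ ≤ ∑ v ∈ heavyᶜ, (G.degree v : ℝ) := by linarith
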